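/- Let X be a proper, length metric space, Γ a group of isometries of X acting discretely and freely, and f ∈ F. Then: (i) the natural action of Γ on Loc-Geod(X) equipped with the distance f is by isometries and is discrete (for every γ and R ≥ 0 the set {g ∈ Γ : f(gγ,γ) ≤ R} is finite); (ii) the quotient space Γ\Loc-Geod(X) is metrizable, the quotient pseudometric induced by f being a metric inducing the quotient topology. -/

import Mathlib

open Filter Metric Set MeasureTheory Topology
open scoped ENNReal NNReal

noncomputable section

namespace Paper

variable {X : Type*} [MetricSpace X]

/-- The Gromov product `(y,z)_x`. -/
def gromov (x y z : X) : ℝ := (dist x y + dist x z - dist y z) / 2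

/-- `δ`-hyperbolicity via the four points condition on Gromov products. -/
def IsHyperbolic (X : Type*) [MetricSpace X] (δ : ℝ) : Prop :=
  ∀ w x y z : X, min (gromov w x y) (gromov w y z) - δ ≤ gromov w x z

/-- `X` is `P₀`-packed at scale `r₀`: every closed ball of radius `3r₀` contains at most `P₀`
points that are pairwise `2r₀`-separated. -/
def IsPacked (X : Type*) [MetricSpace X] (P₀ : ℕ) (r₀ : ℝ) : Prop :=
  ∀ (x : X) (s : Finset X), (↑s : Set X) ⊆ Metric.closedBall x (3 * r₀) →
    (∀ y ∈ s, ∀ z ∈ s, y ≠ z → 2 * r₀ < dist y z) → s.card ≤ P₀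

/-- A `σ`-geodesic line: an isometric line all whose subsegments are `σ`-geodesics. -/
structure IsSigmaGeodLine (σ : X → X → ℝ → X) (γ : ℝ → X) : Prop where
  isom : Isometry γ
  seg : ∀ s t : ℝ, s ≤ t → ∀ l ∈ Set.Icc (0:ℝ) 1, σ (γ s) (γ t) l = γ (s + l * (t - s))

/-- `(X,σ)` is a GCB-space: `σ` is a convex, consistent, reversible, geodesically complete
geodesic bicombing on the (complete) metric space `X`. -/
structure IsGCB (σ : X → X → ℝ → X) : Prop where
  source : ∀ x y : X, σ x y 0 = x
  target : ∀ x y : X, σ x y 1 = y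
  propor : ∀ x y : X, ∀ s ∈ Set.Icc (0:ℝ) 1, ∀ t ∈ Set.Icc (0:ℝ) 1,
    dist (σ x y s) (σ x y t) = |s - t| * dist x y
  convex : ∀ x y x' y' : X, ConvexOn ℝ (Set.Icc (0:ℝ) 1) fun t => dist (σ x y t) (σ x' y' t)
  consistent : ∀ x y : X, ∀ s t : ℝ, 0 ≤ s → s ≤ t → t ≤ 1 → ∀ l ∈ Set.Icc (0:ℝ) 1,
    σ (σ x y s) (σ x y t) l = σ x y ((1 - l) * s + l * t)
  reversible : ∀ x y : X, ∀ t ∈ Set.Icc (0:ℝ) 1, σ x y t = σ y x (1 - t)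
  geodComplete : ∀ x y : X, ∃ γ : ℝ → X, IsSigmaGeodLine σ γ ∧ ∃ a b : ℝ, a ≤ b ∧
    b - a = dist x y ∧ ∀ l ∈ Set.Icc (0:ℝ) 1, γ (a + l * (b - a)) = σ x y l

section Group

variable (G : Type*) [Group G] [MulAction G X]

/-- A group of isometries is discrete if orbits meet balls in finitely many elements. -/
def DiscreteAction (X : Type*) [MetricSpace X] [MulAction G X] : Prop :=
  ∀ (x : X) (R : ℝ), {g : G | dist x (g • x) ≤ R}.Finite

/-- The action is free. -/
def FreeAction (X : Type*) [MetricSpace X] [MulAction G X] : Prop :=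
  ∀ (g : G) (x : X), g • x = x → g = 1

/-- `Γ` acts by `σ`-isometries. -/
def SigmaEquivariant (σ : X → X → ℝ → X) : Prop :=
  ∀ (g : G) (x y : X), ∀ t ∈ Set.Icc (0:ℝ) 1, g • σ x y t = σ (g • x) (g • y) t

/-- The number of orbit points in the open ball `B(x,T)`. -/
def orbitCount (x : X) (T : ℝ) : ℕ :=
  Nat.card {y : X // y ∈ MulAction.orbit G x ∧ dist x y < T}

/-- The critical exponent `h_Γ = limsup (1/T) log #(Γx ∩ B(x,T))`. -/
def critExp (x : X) : EReal :=
  limsup (fun T : ℝ => ((Real.log (orbitCount G x T) / T : ℝ) : EReal)) atTop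

end Group

/-- The quotient space `Γ\X`. -/
def QuotX (G : Type*) (X : Type*) [Group G] [MulAction G X] [MetricSpace X] :=
  Quotient (MulAction.orbitRel G X)

section Quot

variable (G : Type*) [Group G] [MulAction G X] [IsIsometricSMul G X]

private lemma bddb (x y : X) : BddBelow (Set.range fun g : G => dist x (g • y)) :=
  ⟨0, by rintro _ ⟨g, rfl⟩; exact dist_nonneg⟩

/-- The quotient distance `d(πx,πy) = inf_g d(x, g·y)`. -/
def qdist (a b : QuotX G X) : ℝ :=
  ⨅ g : G, dist (Quotient.out a) (g • Quotient.out b)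

private lemma qdist_self (a : QuotX G X) : qdist G a a = 0 := by
  refine le_antisymm ?_ (le_ciInf fun g => dist_nonneg)
  have h := ciInf_le (bddb G (Quotient.out a) (Quotient.out a)) (1 : G)
  simp only [one_smul, dist_self] at h
  exact h

private lemma qdist_comm_le (a b : QuotX G X) : qdist G a b ≤ qdist G b a := by
  refine le_ciInf fun g => ?_
  have h := ciInf_le (bddb G (Quotient.out a) (Quotient.out b)) g⁻¹
  refine h.trans_eq ?_
  rw [← dist_smul g (Quotient.out a) (g⁻¹ • Quotient.out b), smul_inv_smul, dist_comm]

private lemma qdist_triangle (a b c : QuotX G X) :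
    qdist G a c ≤ qdist G a b + qdist G b c := by
  refine le_of_forall_pos_le_add fun ε hε => ?_
  have h1 : qdist G a b < qdist G a b + ε / 2 := lt_add_of_pos_right _ (half_pos hε)
  have h2 : qdist G b c < qdist G b c + ε / 2 := lt_add_of_pos_right _ (half_pos hε)
  obtain ⟨g, hg⟩ := exists_lt_of_ciInf_lt h1
  obtain ⟨h, hh⟩ := exists_lt_of_ciInf_lt h2
  have key : qdist G a c ≤ dist (Quotient.out a) ((g * h) • Quotient.out c) :=
    ciInf_le (bddb G _ _) (g * h)
  have e : dist (g • Quotient.out b) ((g * h) • Quotient.out c)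
      = dist (Quotient.out b) (h • Quotient.out c) := by
    rw [mul_smul, dist_smul]
  have tri := dist_triangle (Quotient.out a) (g • Quotient.out b) ((g * h) • Quotient.out c)
  rw [e] at tri
  have := key.trans tri
  linarith

/-- The quotient pseudometric on `Γ\X` (a genuine metric whenever the action is discrete
and free). -/
instance : PseudoMetricSpace (QuotX G X) where
  dist := qdist G
  dist_self := qdist_self G
  dist_comm a b := le_antisymm (qdist_comm_le G a b) (qdist_comm_le G b a)
  dist_triangle := qdist_triangle G

/-- The projection `π : X → Γ\X`. -/
def projQ (x : X) : QuotX G X := Quotient.mk (MulAction.orbitRel G X) x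

lemma projQ_dist_le (x y : X) : dist (projQ G x) (projQ G y) ≤ dist x y := by
  obtain ⟨k, hk⟩ := MulAction.mem_orbit_iff.mp
    ((MulAction.orbitRel_apply (G := G)).mp (Quotient.mk_out (s := MulAction.orbitRel G X) x))
  obtain ⟨l, hl⟩ := MulAction.mem_orbit_iff.mp
    ((MulAction.orbitRel_apply (G := G)).mp (Quotient.mk_out (s := MulAction.orbitRel G X) y))
  have h1 : dist (projQ G x) (projQ G y)
      ≤ dist (Quotient.out (projQ G x)) ((k * l⁻¹) • Quotient.out (projQ G y)) :=
    ciInf_le (bddb G _ _) (k * l⁻¹)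
  have hk2 : Quotient.out (projQ G x) = k • x := hk.symm
  have hl2 : Quotient.out (projQ G y) = l • y := hl.symm
  rw [hk2, hl2, smul_smul, inv_mul_cancel_right, dist_smul] at h1
  exact h1

/-- `π` as a continuous (1-Lipschitz) map. -/
def projCM : C(X, QuotX G X) :=
  ⟨projQ G, (LipschitzWith.of_dist_le_mul (K := 1) fun a b => by
    simpa using projQ_dist_le G a b).continuous⟩

end Quot

end Paper

namespace Paper

variable {X : Type*} [MetricSpace X]

/-- The space of local geodesic lines of a (pseudo)metric space `Y`, as a subset of the space
of continuous maps `ℝ → Y` (with the topology of uniform convergence on compact sets). -/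
def LocGeodSet (Y : Type*) [PseudoMetricSpace Y] : Set C(ℝ, Y) :=
  {γ | ∀ t : ℝ, ∃ ε > 0, ∀ s ∈ Set.Icc (t - ε) (t + ε), ∀ u ∈ Set.Icc (t - ε) (t + ε),
    dist (γ s) (γ u) = |s - u|}

/-- The set of (parametrized) `σ`-geodesic lines of `X`. -/
def SigmaGeodLines (σ : X → X → ℝ → X) : Set C(ℝ, X) := {γ | IsSigmaGeodLine σ ⇑γ}

section Proj

variable (G : Type*) [Group G] [MulAction G X] [IsIsometricSMul G X]

/-- Post-composition with the projection `π : X → Γ\X`. -/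
def projComp (γ : C(ℝ, X)) : C(ℝ, QuotX G X) := (projCM G).comp γ

/-- The space `Loc-Geod_σ(Γ\X)`: the image of the `σ`-geodesic lines of `X` under `Π`. -/
def LocGeodQuotSet (σ : X → X → ℝ → X) : Set C(ℝ, QuotX G X) :=
  projComp G '' SigmaGeodLines σ

end Proj

/-- Translation of `ℝ` by `c`, as a continuous map. -/
def trCM (c : ℝ) : C(ℝ, ℝ) := ⟨fun t => t + c, continuous_add_right c⟩

/-- The reparametrization flow `Φ_c γ = γ(· + c)`. -/
def shiftCM {Y : Type*} [TopologicalSpace Y] (c : ℝ) (γ : C(ℝ, Y)) : C(ℝ, Y) := γ.comp (trCM c)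

lemma shift_sigma {σ : X → X → ℝ → X} (c : ℝ) {γ : ℝ → X} (h : IsSigmaGeodLine σ γ) :
    IsSigmaGeodLine σ fun t => γ (t + c) := by
  constructor
  · exact h.isom.comp (Isometry.of_dist_eq fun a b => dist_add_right a b c)
  · intro s t hst l hl
    have h2 := h.seg (s + c) (t + c) (by linarith) l hl
    calc σ (γ (s + c)) (γ (t + c)) l = γ (s + c + l * (t + c - (s + c))) := h2
    _ = γ (s + l * (t - s) + c) := by ring_nf

section Flow

variable (G : Type*) [Group G] [MulAction G X] [IsIsometricSMul G X]

lemma shift_mem {σ : X → X → ℝ → X} (c : ℝ) {γ : C(ℝ, QuotX G X)}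
    (h : γ ∈ LocGeodQuotSet G σ) : shiftCM c γ ∈ LocGeodQuotSet G σ := by
  obtain ⟨γ', hγ', rfl⟩ := h
  exact ⟨shiftCM c γ', shift_sigma c hγ', ContinuousMap.ext fun t => rfl⟩

/-- The time-one map `Φ₁` of the reparametrization flow on `Loc-Geod_σ(Γ\X)`. -/
def flowOne (σ : X → X → ℝ → X) : ↥(LocGeodQuotSet G σ) → ↥(LocGeodQuotSet G σ) :=
  fun γ => ⟨shiftCM 1 γ.1, shift_mem G 1 γ.2⟩

end Flow

/-- The class `F` of admissible weight functions. -/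
structure AdmissibleF (f : ℝ → ℝ) : Prop where
  cont : Continuous f
  pos : ∀ s, 0 < f s
  symm : ∀ s : ℝ, f (-s) = f s
  integrable : MeasureTheory.Integrable f
  mass : ∫ s, f s = 1
  momentIntegrable : MeasureTheory.Integrable fun s : ℝ => 2 * |s| * f s

/-- The constant `C(f) = ∫ 2|s| f(s) ds`. -/
def Cf (f : ℝ → ℝ) : ℝ := ∫ s : ℝ, 2 * |s| * f s

/-- The distance `f(γ,γ') = ∫ d(γ(s),γ'(s)) f(s) ds` on spaces of (local) geodesics. -/
def fDist (f : ℝ → ℝ) {Y : Type*} [PseudoMetricSpace Y] (γ γ' : C(ℝ, Y)) : ℝ :=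
  ∫ s : ℝ, dist (γ s) (γ' s) * f s

section Dynamics

variable {Y : Type*}

/-- The dynamical distance `d^n(y,y') = max_{0 ≤ i ≤ n-1} d(T^i y, T^i y')`. -/
def dynDist (d : Y → Y → ℝ) (T : Y → Y) (n : ℕ) (a b : Y) : ℝ :=
  ⨆ i : Fin n, d (T^[(i : ℕ)] a) (T^[(i : ℕ)] b)

/-- The dynamical ball `B_{d^n}(a,r)`. -/
def dynBall (d : Y → Y → ℝ) (T : Y → Y) (n : ℕ) (a : Y) (r : ℝ) : Set Y :=
  {b | dynDist d T n a b < r}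

/-- The covering number of `K` at scale `r` with respect to a distance function `d`. -/
def covNum (d : Y → Y → ℝ) (K : Set Y) (r : ℝ) : ℕ :=
  sInf {m : ℕ | ∃ c : Fin m → Y, K ⊆ ⋃ i, {b | d (c i) b < r}}

/-- The Bowen entropy of `K` w.r.t. `d`: `lim_{r→0} limsup_n (1/n) log Cov_{d^n}(K,r)`. -/
def covEntropy (d : Y → Y → ℝ) (T : Y → Y) (K : Set Y) : EReal :=
  ⨆ r : {r : ℝ // 0 < r},
    limsup (fun n : ℕ => ((Real.log (covNum (dynDist d T n) K r.1) / n : ℝ) : EReal)) atTop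

/-- The entropy of (the join of the first `n` iterates of) a finite measurable partition. -/
def partitionEnt [MeasurableSpace Y] (μ : Measure Y) (T : Y → Y) {k : ℕ}
    (P : Fin k → Set Y) (n : ℕ) : ℝ :=
  ∑ a : Fin n → Fin k, Real.negMulLog (μ (⋂ i : Fin n, T^[(i : ℕ)] ⁻¹' P (a i))).toReal

/-- The Kolmogorov–Sinai entropy of `μ`. -/
def ksEntropy [MeasurableSpace Y] (μ : Measure Y) (T : Y → Y) : EReal :=
  ⨆ (k : ℕ) (P : Fin k → Set Y)
    (_ : (∀ i, MeasurableSet (P i)) ∧ Pairwise (Function.onFun Disjoint P) ∧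
      ⋃ i, P i = Set.univ),
    ((liminf (fun n : ℕ => partitionEnt μ T P n / n) atTop : ℝ) : EReal)

/-- `d` is the distance of a metric inducing the topology of `Y`. -/
def InducesTopology [ts : TopologicalSpace Y] (d : Y → Y → ℝ) : Prop :=
  ∃ m : MetricSpace Y, m.toPseudoMetricSpace.toUniformSpace.toTopologicalSpace = ts ∧
    ∀ a b : Y, @dist Y m.toPseudoMetricSpace.toDist a b = d a b

/-- `d` is the distance of a complete metric inducing the topology of `Y`. -/
def InducesTopologyComplete [ts : TopologicalSpace Y] (d : Y → Y → ℝ) : Prop :=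
  ∃ m : MetricSpace Y, m.toPseudoMetricSpace.toUniformSpace.toTopologicalSpace = ts ∧
    (∀ a b : Y, @dist Y m.toPseudoMetricSpace.toDist a b = d a b) ∧
    @CompleteSpace Y m.toPseudoMetricSpace.toUniformSpace

/-- The upper local entropy of `μ` with respect to the distance `d`. -/
def upperLocalEnt [MeasurableSpace Y] (μ : Measure Y) (T : Y → Y) (d : Y → Y → ℝ) : EReal :=
  essSup (fun y : Y =>
    ⨆ r : {r : ℝ // 0 < r},
      limsup (fun n : ℕ =>
        ((-Real.log (μ (dynBall d T n y r.1)).toReal / n : ℝ) : EReal)) atTop) μ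

/-- The lower local entropy of `μ` with respect to the distance `d`. -/
def lowerLocalEnt [MeasurableSpace Y] (μ : Measure Y) (T : Y → Y) (d : Y → Y → ℝ) : EReal :=
  essInf (fun y : Y =>
    ⨆ r : {r : ℝ // 0 < r},
      liminf (fun n : ℕ =>
        ((-Real.log (μ (dynBall d T n y r.1)).toReal / n : ℝ) : EReal)) atTop) μ

/-- The ergodic invariant probability measures of `(Y,T)`. -/
def ErgProb [MeasurableSpace Y] (T : Y → Y) :=
  {μ : Measure Y // IsProbabilityMeasure μ ∧ Ergodic T μ}

/-- The topological entropy, defined as the supremum of the Kolmogorov–Sinai entropies of the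
ergodic invariant probability measures. -/
def topEnt [MeasurableSpace Y] (T : Y → Y) : EReal :=
  ⨆ μ : ErgProb T, ksEntropy μ.1 T

/-- The upper local entropy of the system: `sup_μ inf_d` of the upper local entropies. -/
def upperLocalEntSys [TopologicalSpace Y] [MeasurableSpace Y] (T : Y → Y) : EReal :=
  ⨆ μ : ErgProb T, ⨅ d : {d : Y → Y → ℝ // InducesTopologyComplete d},
    upperLocalEnt μ.1 T d.1

/-- The lower local entropy of the system: `sup_μ inf_d` of the lower local entropies. -/
def lowerLocalEntSys [TopologicalSpace Y] [MeasurableSpace Y] (T : Y → Y) : EReal :=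
  ⨆ μ : ErgProb T, ⨅ d : {d : Y → Y → ℝ // InducesTopologyComplete d},
    lowerLocalEnt μ.1 T d.1

/-- The invariant topological entropy: in the Bowen formula the supremum is restricted to the
compact `T`-invariant subsets. -/
def invTopEnt [TopologicalSpace Y] (T : Y → Y) : EReal :=
  ⨅ d : {d : Y → Y → ℝ // InducesTopology d},
    ⨆ K : {K : Set Y // IsCompact K ∧ T '' K = K}, covEntropy d.1 T K.1

end Dynamics

end Paper

namespace Paper

/-- `X` is a length space: the distance is the infimum of the lengths (total variations) of the
continuous paths joining two points. -/
def IsLengthSpace (X : Type*) [MetricSpace X] : Prop :=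
  ∀ x y : X, ENNReal.ofReal (dist x y) =
    ⨅ (γ : C(unitInterval, X)) (_ : γ 0 = x) (_ : γ 1 = y), eVariationOn γ Set.univ

/-- The action of an isometry `g` on continuous maps `ℝ → X` by postcomposition. -/
def smulCM {X : Type*} [MetricSpace X] (G : Type*) [Group G] [MulAction G X]
    [IsIsometricSMul G X] (g : G) (γ : C(ℝ, X)) : C(ℝ, X) :=
  ⟨fun t => g • γ t, ((isometry_smul X g).continuous).comp γ.continuous⟩

/-- The orbit equivalence relation of `Γ` on `Loc-Geod(X)`. -/
def locRel {X : Type*} [MetricSpace X] (G : Type*) [Group G] [MulAction G X]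
    [IsIsometricSMul G X] (a b : ↥(LocGeodSet X)) : Prop :=
  ∃ g : G, smulCM G g a.1 = b.1

end Paper

/-! The lower bound `f(γ, γ') ≥ d(γ 0, γ' 0) - C(f)`, which holds because local geodesic lines
are 1-Lipschitz, turns discreteness of `Γ` on `X` into discreteness on `Loc-Geod(X)`, so that
`Γ`-orbits in `Loc-Geod(X)` are closed. Comparing `f` with uniform convergence on compact
intervals (`f` is bounded below on compact sets and `s ↦ 2|s| f(s)` has small tails) shows that
`f` metrizes `Loc-Geod(X)`. For an isometric action with closed orbits on a metric space,
`inf_g d(a, g b)` is then a metric on the orbit space, and it induces the quotient topology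
because the quotient map is open. -/

namespace Paper

section LocalGeodesic

variable {Y : Type*} [PseudoMetricSpace Y] {γ : C(ℝ, Y)}

lemma dist_le_sub_of_mem_locGeodSet (hγ : γ ∈ LocGeodSet Y) {s t : ℝ} (hst : s ≤ t) :
    dist (γ s) (γ t) ≤ t - s := by
  have hclosed : IsClosed {u | dist (γ s) (γ u) ≤ u - s} :=
    isClosed_le (by fun_prop) (by fun_prop)
  refine (hclosed.inter isClosed_Icc).mem_of_ge_of_forall_exists_gt (by simp) hst ?_
  rintro x ⟨hx, -, hxt⟩
  obtain ⟨ε, hε, hloc⟩ := hγ x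
  set y := min (x + ε) t
  have hxy : x < y := lt_min (by linarith) hxt
  refine ⟨y, ?_, hxy, min_le_right _ _⟩
  have hstep := hloc x ⟨by linarith, by linarith⟩ y ⟨by linarith, min_le_left _ _⟩
  rw [abs_sub_comm, abs_of_pos (sub_pos.2 hxy)] at hstep
  calc dist (γ s) (γ y) ≤ dist (γ s) (γ x) + dist (γ x) (γ y) := dist_triangle _ _ _
    _ ≤ y - s := by rw [hstep]; linarith [show dist (γ s) (γ x) ≤ x - s from hx]

lemma dist_le_abs_sub_of_mem_locGeodSet (hγ : γ ∈ LocGeodSet Y) (s t : ℝ) :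
    dist (γ s) (γ t) ≤ |s - t| := by
  rcases le_total s t with hst | hts
  · rw [abs_sub_comm, abs_of_nonneg (sub_nonneg.2 hst)]
    exact dist_le_sub_of_mem_locGeodSet hγ hst
  · rw [dist_comm, abs_of_nonneg (sub_nonneg.2 hts)]
    exact dist_le_sub_of_mem_locGeodSet hγ hts

lemma dist_apply_le_dist_apply_add {a b : C(ℝ, Y)} (ha : a ∈ LocGeodSet Y)
    (hb : b ∈ LocGeodSet Y) (s t : ℝ) :
    dist (a s) (b s) ≤ dist (a t) (b t) + 2 * |s - t| := by
  have hb' := dist_le_abs_sub_of_mem_locGeodSet hb t s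
  rw [abs_sub_comm] at hb'
  linarith [dist_triangle4 (a s) (a t) (b t) (b s), dist_le_abs_sub_of_mem_locGeodSet ha s t]

end LocalGeodesic

lemma tendsto_setIntegral_compl_Icc {g : ℝ → ℝ} (hg : Integrable g) :
    Tendsto (fun T => ∫ s in (Icc (-T) T)ᶜ, g s) atTop (𝓝 0) := by
  have hanti : Antitone fun T : ℝ => (Icc (-T) T)ᶜ := fun T T' hTT' =>
    compl_subset_compl.2 (Icc_subset_Icc (neg_le_neg hTT') hTT')
  have hempty : ⋂ T : ℝ, (Icc (-T) T)ᶜ = ∅ :=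
    eq_empty_of_forall_notMem fun s hs =>
      mem_iInter.1 hs |s| ⟨neg_abs_le s, le_abs_self s⟩
  simpa [hempty] using tendsto_setIntegral_of_antitone (μ := volume)
    (fun T => measurableSet_Icc.compl) hanti ⟨0, hg.integrableOn⟩

section FDist

variable {Y : Type*} [PseudoMetricSpace Y] {f : ℝ → ℝ} {a b c : C(ℝ, Y)}

lemma integrable_dist_mul (hf : AdmissibleF f) (ha : a ∈ LocGeodSet Y)
    (hb : b ∈ LocGeodSet Y) : Integrable fun s => dist (a s) (b s) * f s := by
  refine ((hf.integrable.const_mul (dist (a 0) (b 0))).add hf.momentIntegrable).mono'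
    ((a.continuous.dist b.continuous).mul hf.cont).aestronglyMeasurable
    (Eventually.of_forall fun s => ?_)
  have hs := dist_apply_le_dist_apply_add ha hb s 0
  rw [sub_zero] at hs
  rw [Real.norm_of_nonneg (mul_nonneg dist_nonneg (hf.pos s).le)]
  calc dist (a s) (b s) * f s ≤ (dist (a 0) (b 0) + 2 * |s|) * f s :=
        mul_le_mul_of_nonneg_right hs (hf.pos s).le
    _ = dist (a 0) (b 0) * f s + 2 * |s| * f s := by ring

lemma fDist_self (a : C(ℝ, Y)) : fDist f a a = 0 := by
  simp [fDist]

lemma fDist_comm (a b : C(ℝ, Y)) : fDist f a b = fDist f b a := by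
  simp only [fDist, dist_comm]

lemma fDist_triangle (hf : AdmissibleF f) (ha : a ∈ LocGeodSet Y) (hb : b ∈ LocGeodSet Y)
    (hc : c ∈ LocGeodSet Y) : fDist f a c ≤ fDist f a b + fDist f b c := by
  rw [fDist, fDist, fDist, ← integral_add (integrable_dist_mul hf ha hb)
    (integrable_dist_mul hf hb hc)]
  refine integral_mono (integrable_dist_mul hf ha hc)
    ((integrable_dist_mul hf ha hb).add (integrable_dist_mul hf hb hc)) fun s => ?_
  rw [← add_mul]
  exact mul_le_mul_of_nonneg_right (dist_triangle _ _ _) (hf.pos s).le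

lemma dist_sub_Cf_le_fDist (hf : AdmissibleF f) (ha : a ∈ LocGeodSet Y)
    (hb : b ∈ LocGeodSet Y) : dist (a 0) (b 0) - Cf f ≤ fDist f a b := by
  have hle : ∀ s, dist (a 0) (b 0) * f s - 2 * |s| * f s ≤ dist (a s) (b s) * f s := by
    intro s
    have hs := dist_apply_le_dist_apply_add ha hb 0 s
    rw [zero_sub, abs_neg] at hs
    nlinarith [hf.pos s]
  calc dist (a 0) (b 0) - Cf f = ∫ s, (dist (a 0) (b 0) * f s - 2 * |s| * f s) := by
        rw [integral_sub (hf.integrable.const_mul _) hf.momentIntegrable, integral_const_mul,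
          hf.mass, mul_one, Cf]
    _ ≤ fDist f a b := integral_mono ((hf.integrable.const_mul _).sub hf.momentIntegrable)
        (integrable_dist_mul hf ha hb) hle

lemma eq_of_fDist_eq_zero {X : Type*} [MetricSpace X] {a b : C(ℝ, X)} (hf : AdmissibleF f)
    (ha : a ∈ LocGeodSet X) (hb : b ∈ LocGeodSet X) (h : fDist f a b = 0) : a = b := by
  have hae := (integral_eq_zero_iff_of_nonneg (fun s => mul_nonneg dist_nonneg (hf.pos s).le)
    (integrable_dist_mul hf ha hb)).1 h
  have hzero := (Continuous.ae_eq_iff_eq volume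
    ((a.continuous.dist b.continuous).mul hf.cont) continuous_const).1 hae
  ext t
  have ht : dist (a t) (b t) * f t = 0 := congrFun hzero t
  simpa [(hf.pos t).ne'] using ht

lemma exists_forall_fDist_lt_dist_lt (hf : AdmissibleF f) (T : ℝ) {ε : ℝ} (hε : 0 < ε) :
    ∃ δ > 0, ∀ a ∈ LocGeodSet Y, ∀ b ∈ LocGeodSet Y, fDist f a b < δ →
      ∀ t ∈ Icc (-T) T, dist (a t) (b t) < ε := by
  obtain ⟨m, hm, hfm⟩ := (isCompact_Icc (a := -T) (b := T + ε)).exists_forall_le'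
    hf.cont.continuousOn fun s _ => hf.pos s
  refine ⟨ε / 2 * m * (ε / 4), by positivity, fun a ha b hb hab t ht => ?_⟩
  by_contra! hεt
  -- on `[t, t + ε/4]` the 1-Lipschitz bound keeps `d(a s, b s) ≥ ε/2`, while `f ≥ m` there
  have hlow : ∀ s ∈ Icc t (t + ε / 4), ε / 2 * m ≤ dist (a s) (b s) * f s := by
    intro s hs
    have hts : |t - s| ≤ ε / 4 := by
      rw [abs_sub_comm, abs_of_nonneg (by linarith [hs.1])]
      linarith [hs.2]
    have hs' := dist_apply_le_dist_apply_add ha hb t s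
    exact mul_le_mul (by linarith) (hfm s ⟨by linarith [ht.1, hs.1], by linarith [ht.2, hs.2]⟩)
      hm.le dist_nonneg
  have hint := integrable_dist_mul hf ha hb
  have hvol : volume.real (Icc t (t + ε / 4)) = ε / 4 := by
    rw [Real.volume_real_Icc, max_eq_left (by linarith)]
    ring
  have hmass : ε / 2 * m * (ε / 4) ≤ fDist f a b := calc
    _ = ε / 2 * m * volume.real (Icc t (t + ε / 4)) := by rw [hvol]
    _ ≤ ∫ s in Icc t (t + ε / 4), dist (a s) (b s) * f s :=
        setIntegral_ge_of_const_le_real measurableSet_Icc (by simp [Real.volume_Icc]) hlow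
          hint.integrableOn
    _ ≤ fDist f a b := setIntegral_le_integral hint
        (Eventually.of_forall fun s => mul_nonneg dist_nonneg (hf.pos s).le)
  linarith

lemma exists_forall_dist_lt_fDist_lt (hf : AdmissibleF f) {ε : ℝ} (hε : 0 < ε) :
    ∃ T, ∃ η > 0, ∀ a ∈ LocGeodSet Y, ∀ b ∈ LocGeodSet Y,
      (∀ t ∈ Icc (-T) T, dist (a t) (b t) < η) → fDist f a b < ε := by
  obtain ⟨T, hT, hT0⟩ := (((tendsto_setIntegral_compl_Icc hf.momentIntegrable).eventually
    (gt_mem_nhds (half_pos hε))).and (eventually_ge_atTop 0)).exists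
  refine ⟨T, ε / 2, half_pos hε, fun a ha b hb hab => ?_⟩
  set tail := (Icc (-T) T)ᶜ.indicator fun s => 2 * |s| * f s
  have hbound : ∀ s, dist (a s) (b s) * f s ≤ ε / 2 * f s + tail s := by
    intro s
    by_cases hs : s ∈ Icc (-T) T
    · simpa [tail, hs] using mul_le_mul_of_nonneg_right (hab s hs).le (hf.pos s).le
    · obtain ⟨e, he, hse⟩ : ∃ e ∈ Icc (-T) T, |s - e| ≤ |s| := by
        have hout : s < -T ∨ T < s := by simpa only [mem_Icc, not_and_or, not_le] using hs
        rcases hout with h | h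
        · refine ⟨-T, ⟨le_rfl, by linarith⟩, ?_⟩
          rw [abs_of_neg (by linarith), abs_of_neg (by linarith)]
          linarith
        · refine ⟨T, ⟨by linarith, le_rfl⟩, ?_⟩
          rw [abs_of_pos (by linarith), abs_of_pos (by linarith)]
          linarith
      have hd := dist_apply_le_dist_apply_add ha hb s e
      simp only [tail, indicator_of_mem (mem_compl hs)]
      nlinarith [hab e he, hf.pos s]
  have htail : Integrable tail := hf.momentIntegrable.indicator measurableSet_Icc.compl
  calc fDist f a b ≤ ∫ s, (ε / 2 * f s + tail s) :=
        integral_mono (integrable_dist_mul hf ha hb)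
          ((hf.integrable.const_mul _).add htail) hbound
    _ = ε / 2 + ∫ s in (Icc (-T) T)ᶜ, 2 * |s| * f s := by
        rw [integral_add (hf.integrable.const_mul _) htail, integral_const_mul, hf.mass,
          mul_one, integral_indicator measurableSet_Icc.compl]
    _ < ε := by linarith

end FDist

lemma hasBasis_nhds_continuousMap_real {Y : Type*} [PseudoMetricSpace Y] (γ : C(ℝ, Y)) :
    (𝓝 γ).HasBasis (fun p : ℝ × ℝ => 0 < p.2)
      fun p => {γ' | ∀ t ∈ Icc (-p.1) p.1, dist (γ t) (γ' t) < p.2} := by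
  refine (nhds_basis_uniformity'
    uniformity_basis_dist.compactConvergenceUniformity).to_hasBasis ?_ ?_
  · rintro ⟨K, ε⟩ ⟨hK, hε⟩
    obtain ⟨T, hT⟩ := hK.isBounded.subset_closedBall 0
    refine ⟨(T, ε), hε, fun γ' hγ' t ht => hγ' t ?_⟩
    simpa [Real.closedBall_eq_Icc] using hT ht
  · rintro ⟨T, ε⟩ hε
    exact ⟨(Icc (-T) T, ε), ⟨isCompact_Icc, hε⟩, fun γ' hγ' => hγ'⟩

section LocGeodMetric

variable {Y : Type*} [PseudoMetricSpace Y] {f : ℝ → ℝ}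

lemma hasBasis_nhds_locGeodSet (hf : AdmissibleF f) (γ : LocGeodSet Y) :
    (𝓝 γ).HasBasis (fun ε : ℝ => 0 < ε) fun ε => {γ' | fDist f γ.1 γ'.1 < ε} := by
  rw [nhds_subtype]
  refine ((hasBasis_nhds_continuousMap_real γ.1).comap Subtype.val).to_hasBasis ?_ ?_
  · rintro ⟨T, ε⟩ hε
    obtain ⟨δ, hδ, h⟩ := exists_forall_fDist_lt_dist_lt (Y := Y) hf T hε
    exact ⟨δ, hδ, fun γ' hγ' t ht => h _ γ.2 _ γ'.2 hγ' t ht⟩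
  · intro ε hε
    obtain ⟨T, η, hη, h⟩ := exists_forall_dist_lt_fDist_lt (Y := Y) hf hε
    exact ⟨(T, η), hη, fun γ' hγ' => h _ γ.2 _ γ'.2 hγ'⟩

lemma isOpen_locGeodSet_iff (hf : AdmissibleF f) (s : Set (LocGeodSet Y)) :
    IsOpen s ↔ ∀ γ ∈ s, ∃ ε > 0, ∀ γ', fDist f γ.1 γ'.1 < ε → γ' ∈ s := by
  simp only [isOpen_iff_mem_nhds]
  exact forall₂_congr fun γ _ => (hasBasis_nhds_locGeodSet hf γ).mem_iff

variable (f) in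
/-- The topology of this metric space is definitionally the subspace topology of `C(ℝ, X)`. -/
abbrev locGeodMetricSpace {X : Type*} [MetricSpace X] (hf : AdmissibleF f) :
    MetricSpace (LocGeodSet X) :=
  .ofDistTopology (fun a b => fDist f a.1 b.1) (fun a => fDist_self a.1)
    (fun a b => fDist_comm a.1 b.1) (fun a b c => fDist_triangle hf a.2 b.2 c.2)
    (isOpen_locGeodSet_iff hf) fun a b h => Subtype.ext (eq_of_fDist_eq_zero hf a.2 b.2 h)

end LocGeodMetric

section OrbitSpace

variable {Y : Type*} [MetricSpace Y] {G : Type*} [Group G] [MulAction G Y]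

lemma isClosed_orbit_of_finite (hfin : ∀ x y : Y, {g : G | dist x (g • y) ≤ 1}.Finite) (y : Y) :
    IsClosed (MulAction.orbit G y) := by
  refine isClosed_of_closure_subset fun x hx => ?_
  have hsub : ball x 1 ∩ MulAction.orbit G y ⊆ (· • y) '' {g : G | dist x (g • y) ≤ 1} := by
    rintro _ ⟨hxz, g, rfl⟩
    exact ⟨g, (mem_ball'.1 hxz).le, rfl⟩
  have hx' : x ∈ closure (ball x 1 ∩ MulAction.orbit G y) :=
    isOpen_ball.inter_closure ⟨mem_ball_self one_pos, hx⟩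
  obtain ⟨g, -, rfl⟩ := ((hfin x y).image _).isClosed.closure_subset (closure_mono hsub hx')
  exact ⟨g, rfl⟩

lemma bddBelow_range_dist_smul (a b : Y) : BddBelow (range fun g : G => dist a (g • b)) :=
  ⟨0, by rintro _ ⟨g, rfl⟩; exact dist_nonneg⟩

lemma iInf_dist_smul_smul_right (a b : Y) (h : G) :
    ⨅ g : G, dist a (g • h • b) = ⨅ g : G, dist a (g • b) := by
  simp_rw [smul_smul]
  exact (Equiv.mulRight h).iInf_comp (g := fun g => dist a (g • b))

lemma iInf_dist_smul_left [IsIsometricSMul G Y] (a b : Y) (h : G) :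
    ⨅ g : G, dist (h • a) (g • b) = ⨅ g : G, dist a (g • b) := by
  have hg : ∀ g : G, dist (h • a) (g • b) = dist a ((h⁻¹ * g) • b) := fun g => by
    rw [mul_smul, ← dist_smul h a, smul_inv_smul]
  simp_rw [hg]
  exact (Equiv.mulLeft h⁻¹).iInf_comp (g := fun g => dist a (g • b))

lemma iInf_dist_smul_comm [IsIsometricSMul G Y] (a b : Y) :
    ⨅ g : G, dist a (g • b) = ⨅ g : G, dist b (g • a) := by
  have hg : ∀ g : G, dist a (g • b) = dist b (g⁻¹ • a) := fun g => by
    rw [dist_comm, ← dist_smul g⁻¹, inv_smul_smul]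
  simp_rw [hg]
  exact (Equiv.inv G).iInf_comp (g := fun g => dist b (g • a))

variable [IsIsometricSMul G Y] {r : Y → Y → Prop} (hr : ∀ a b, r a b ↔ ∃ g : G, g • a = b)
include hr

def orbitQuotDist : Quot r → Quot r → ℝ :=
  Quot.lift₂ (fun a b => ⨅ g : G, dist a (g • b))
    (fun a b₁ b₂ hb => by
      obtain ⟨h, rfl⟩ := (hr _ _).1 hb
      exact (iInf_dist_smul_smul_right a b₁ h).symm)
    (fun a₁ a₂ b ha => by
      obtain ⟨h, rfl⟩ := (hr _ _).1 ha
      exact (iInf_dist_smul_left a₁ b h).symm)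

lemma orbitQuotDist_self (x : Quot r) : orbitQuotDist hr x x = 0 := by
  induction x using Quot.ind with | mk a
  refine le_antisymm ((ciInf_le (bddBelow_range_dist_smul a a) 1).trans_eq ?_)
    (le_ciInf fun g => dist_nonneg)
  rw [one_smul, dist_self]

lemma orbitQuotDist_comm (x y : Quot r) : orbitQuotDist hr x y = orbitQuotDist hr y x := by
  induction x using Quot.ind with | mk a
  induction y using Quot.ind with | mk b
  exact iInf_dist_smul_comm a b

lemma orbitQuotDist_triangle (x y z : Quot r) :
    orbitQuotDist hr x z ≤ orbitQuotDist hr x y + orbitQuotDist hr y z := by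
  induction x using Quot.ind with | mk a
  induction y using Quot.ind with | mk b
  induction z using Quot.ind with | mk c
  refine le_ciInf_add_ciInf fun g h => (ciInf_le (bddBelow_range_dist_smul a c) (g * h)).trans ?_
  calc dist a ((g * h) • c) ≤ dist a (g • b) + dist (g • b) ((g * h) • c) := dist_triangle _ _ _
    _ = dist a (g • b) + dist b (h • c) := by rw [mul_smul, dist_smul]

lemma orbitQuotDist_mk_le (a b : Y) : orbitQuotDist hr (Quot.mk r a) (Quot.mk r b) ≤ dist a b :=
  (ciInf_le (bddBelow_range_dist_smul a b) 1).trans_eq (by rw [one_smul])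

lemma isOpen_iff_orbitQuotDist (s : Set (Quot r)) :
    IsOpen s ↔ ∀ x ∈ s, ∃ ε > 0, ∀ y, orbitQuotDist hr x y < ε → y ∈ s := by
  rw [← isQuotientMap_quot_mk.isOpen_preimage, Metric.isOpen_iff]
  constructor
  · rintro h ⟨a⟩ ha
    obtain ⟨ε, hε, hball⟩ := h a ha
    refine ⟨ε, hε, ?_⟩
    rintro ⟨b⟩ hab
    obtain ⟨g, hg⟩ := exists_lt_of_ciInf_lt hab
    rw [Quot.sound ((hr b (g • b)).2 ⟨g, rfl⟩)]
    exact hball (mem_ball'.2 hg)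
  · intro h a ha
    obtain ⟨ε, hε, hball⟩ := h _ ha
    exact ⟨ε, hε, fun b hb => hball _ ((orbitQuotDist_mk_le hr a b).trans_lt (mem_ball'.1 hb))⟩

lemma eq_of_orbitQuotDist_eq_zero (hclosed : ∀ y : Y, IsClosed (MulAction.orbit G y))
    (x y : Quot r) (h : orbitQuotDist hr x y = 0) : x = y := by
  induction x using Quot.ind with | mk a
  induction y using Quot.ind with | mk b
  have ha : a ∈ closure (MulAction.orbit G b) := Metric.mem_closure_iff.2 fun ε hε => by
    obtain ⟨g, hg⟩ := exists_lt_of_ciInf_lt (h.trans_lt hε)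
    exact ⟨g • b, ⟨g, rfl⟩, hg⟩
  obtain ⟨g, rfl⟩ := (hclosed b).closure_subset ha
  exact (Quot.sound ((hr b _).2 ⟨g, rfl⟩)).symm

theorem exists_metricSpace_quot (hclosed : ∀ y : Y, IsClosed (MulAction.orbit G y)) :
    ∃ m : MetricSpace (Quot r),
      (∀ a b : Y, @dist _ m.toPseudoMetricSpace.toDist (Quot.mk r a) (Quot.mk r b) =
        ⨅ g : G, dist a (g • b)) ∧
      m.toPseudoMetricSpace.toUniformSpace.toTopologicalSpace =
        (inferInstance : TopologicalSpace (Quot r)) :=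
  ⟨.ofDistTopology (orbitQuotDist hr) (orbitQuotDist_self hr) (orbitQuotDist_comm hr)
    (orbitQuotDist_triangle hr) (isOpen_iff_orbitQuotDist hr)
    (eq_of_orbitQuotDist_eq_zero hr hclosed), fun _ _ => rfl, rfl⟩

end OrbitSpace

section LocGeodAction

variable {X : Type*} [MetricSpace X] {G : Type*} [Group G] [MulAction G X] [IsIsometricSMul G X]

lemma smulCM_mem_locGeodSet {γ : C(ℝ, X)} (hγ : γ ∈ LocGeodSet X) (g : G) :
    smulCM G g γ ∈ LocGeodSet X := by
  intro t
  obtain ⟨ε, hε, hloc⟩ := hγ t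
  exact ⟨ε, hε, fun s hs u hu => (dist_smul g _ _).trans (hloc s hs u hu)⟩

lemma fDist_smulCM (f : ℝ → ℝ) (g : G) (γ γ' : C(ℝ, X)) :
    fDist f (smulCM G g γ) (smulCM G g γ') = fDist f γ γ' := by
  simp only [fDist, smulCM, ContinuousMap.coe_mk, dist_smul]

instance : MulAction G ↥(LocGeodSet X) where
  smul g γ := ⟨smulCM G g γ.1, smulCM_mem_locGeodSet γ.2 g⟩
  one_smul γ := Subtype.ext <| ContinuousMap.ext fun t => one_smul G (γ.1 t)
  mul_smul g h γ := Subtype.ext <| ContinuousMap.ext fun t => mul_smul g h (γ.1 t)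

lemma locRel_iff (a b : LocGeodSet X) : locRel G a b ↔ ∃ g : G, g • a = b :=
  exists_congr fun _ => by rw [Subtype.ext_iff]; rfl

lemma finite_setOf_fDist_smulCM_le {f : ℝ → ℝ} (hf : AdmissibleF f) (hdisc : DiscreteAction G X)
    {a b : C(ℝ, X)} (ha : a ∈ LocGeodSet X) (hb : b ∈ LocGeodSet X) (R : ℝ) :
    {g : G | fDist f a (smulCM G g b) ≤ R}.Finite := by
  refine (hdisc (b 0) (dist (b 0) (a 0) + R + Cf f)).subset fun g (hg : _ ≤ R) => ?_
  have hlow : dist (a 0) (g • b 0) - Cf f ≤ fDist f a (smulCM G g b) :=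
    dist_sub_Cf_le_fDist hf ha (smulCM_mem_locGeodSet hb g)
  show dist (b 0) (g • b 0) ≤ _
  linarith [dist_triangle (b 0) (a 0) (g • b 0)]

end LocGeodAction

end Paper

open Paper in
theorem statement_11_general {X : Type*} [MetricSpace X]
    (G : Type*) [Group G] [MulAction G X] [IsIsometricSMul G X]
    (hdisc : DiscreteAction G X)
    (f : ℝ → ℝ) (hf : AdmissibleF f) :
    (∀ (g : G) (γ γ' : C(ℝ, X)), fDist f (smulCM G g γ) (smulCM G g γ') = fDist f γ γ') ∧
    (∀ γ ∈ LocGeodSet X, ∀ R : ℝ, {g : G | fDist f (smulCM G g γ) γ ≤ R}.Finite) ∧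
    ∃ m : MetricSpace (Quot (locRel G (X := X))),
      (∀ a b : ↥(LocGeodSet X),
        @dist _ m.toPseudoMetricSpace.toDist (Quot.mk _ a) (Quot.mk _ b)
          = ⨅ g : G, fDist f a.1 (smulCM G g b.1)) ∧
      m.toPseudoMetricSpace.toUniformSpace.toTopologicalSpace =
        (inferInstance : TopologicalSpace (Quot (locRel G (X := X)))) := by
  refine ⟨fDist_smulCM f, fun γ hγ R => ?_, ?_⟩
  · simpa only [fDist_comm γ] using finite_setOf_fDist_smulCM_le hf hdisc hγ hγ R
  · let := locGeodMetricSpace f hf (X := X)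
    have : IsIsometricSMul G (LocGeodSet X) :=
      ⟨fun g => Isometry.of_dist_eq fun a b => fDist_smulCM f g a.1 b.1⟩
    exact exists_metricSpace_quot locRel_iff (isClosed_orbit_of_finite fun a b =>
      finite_setOf_fDist_smulCM_le hf hdisc a.2 b.2 1)

open Paper in
/-- Let `X` be a proper length metric space, `Γ = G` a group of isometries
acting discretely and freely, and `f ∈ F`. Then: (i) the natural action of `Γ` on
`(Loc-Geod(X), f)` is by isometries and is discrete; (ii) the quotient `Γ\Loc-Geod(X)` is
metrizable, the quotient pseudometric induced by `f` being a metric inducing the quotient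
topology. -/
theorem statement_11 {X : Type*} [MetricSpace X] [ProperSpace X] (hlen : IsLengthSpace X)
    (G : Type*) [Group G] [MulAction G X] [IsIsometricSMul G X]
    (hdisc : DiscreteAction G X) (hfree : FreeAction G X)
    (f : ℝ → ℝ) (hf : AdmissibleF f) :
    (∀ (g : G) (γ γ' : C(ℝ, X)), fDist f (smulCM G g γ) (smulCM G g γ') = fDist f γ γ') ∧
    (∀ γ ∈ LocGeodSet X, ∀ R : ℝ, {g : G | fDist f (smulCM G g γ) γ ≤ R}.Finite) ∧
    ∃ m : MetricSpace (Quot (locRel G (X := X))),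
      (∀ a b : ↥(LocGeodSet X),
        @dist _ m.toPseudoMetricSpace.toDist (Quot.mk _ a) (Quot.mk _ b)
          = ⨅ g : G, fDist f a.1 (smulCM G g b.1)) ∧
      m.toPseudoMetricSpace.toUniformSpace.toTopologicalSpace =
        (inferInstance : TopologicalSpace (Quot (locRel G (X := X)))) :=
  statement_11_general G hdisc f hf
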